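/- With the periodic carry-sequence setup (m odd, r = (m+1)/2, sequences (a_i), (c_i) periodic with period m, 0 ≤ a_i ≤ 2, 0 ≤ c_i ≤ 3, b_i = 5 + a_i − a_{i−1} − a_{i−r}, and 0 ≤ b_i − 3c_i + c_{i−1} ≤ 2 for all i ∈ ℤ): let t be an integer with 1 ≤ t ≤ m; if c_i = 3, c_{i−tr} = 3, and c_{i−jr} ≤ 2 for all j = 1, …, t−1, then there exists an integer ℓ with 1 ≤ ℓ ≤ t−1 such that c_{i−ℓr} < 2. -/
import Mathlib


theorem carry_corollary2 (m : ℕ) (hm : Odd m)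
    (a c : ℤ → ℤ)
    (ha_per : ∀ i : ℤ, a (i + m) = a i) (hc_per : ∀ i : ℤ, c (i + m) = c i)
    (ha : ∀ i : ℤ, 0 ≤ a i ∧ a i ≤ 2) (hc : ∀ i : ℤ, 0 ≤ c i ∧ c i ≤ 3)
    (hs : ∀ i : ℤ,
      0 ≤ (5 + a i - a (i - 1) - a (i - ((m : ℤ) + 1) / 2)) - 3 * c i + c (i - 1) ∧
      (5 + a i - a (i - 1) - a (i - ((m : ℤ) + 1) / 2)) - 3 * c i + c (i - 1) ≤ 2)
    (t : ℤ) (ht1 : 1 ≤ t) (htm : t ≤ m) (i : ℤ)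
    (hci : c i = 3) (hct : c (i - t * (((m : ℤ) + 1) / 2)) = 3)
    (hmid : ∀ j : ℤ, 1 ≤ j → j ≤ t - 1 → c (i - j * (((m : ℤ) + 1) / 2)) ≤ 2) :
    ∃ l : ℤ, 1 ≤ l ∧ l ≤ t - 1 ∧ c (i - l * (((m : ℤ) + 1) / 2)) < 2 := by
  by_contra hcon
  push_neg at hcon
  set r : ℤ := ((m : ℤ) + 1) / 2 with hr
  have h2r : 2 * r = (m : ℤ) + 1 := by
    obtain ⟨k, hk⟩ := hm
    subst hk
    rw [hr]
    push_cast
    omega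
  have ha1 : ∀ x : ℤ, a (x - 1) = a (x - 2 * r) := by
    intro x
    have e1 : x - 1 = (x - 2 * r) + (m : ℤ) := by omega
    rw [e1, ha_per]
  have hc1 : ∀ x : ℤ, c (x - 1) = c (x - 2 * r) := by
    intro x
    have e1 : x - 1 = (x - 2 * r) + (m : ℤ) := by omega
    rw [e1, hc_per]
  have R : ∀ j k l : ℤ, k = j + 1 → l = j + 2 →
      0 ≤ 5 + a (i - j * r) - a (i - l * r) - a (i - k * r) - 3 * c (i - j * r) + c (i - l * r) ∧
      5 + a (i - j * r) - a (i - l * r) - a (i - k * r) - 3 * c (i - j * r) + c (i - l * r) ≤ 2 := by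
    rintro j k l rfl rfl
    have h := hs (i - j * r)
    rw [ha1, hc1] at h
    rw [show i - j * r - 2 * r = i - (j + 2) * r by ring,
        show i - j * r - r = i - (j + 1) * r by ring] at h
    exact h
  have hmid' : ∀ j : ℤ, 1 ≤ j → j ≤ t - 1 → c (i - j * r) = 2 :=
    fun j h1 h2 => le_antisymm (hmid j h1 h2) (hcon j h1 h2)
  have key : ∀ j k l : ℤ, k = j + 1 → l = j + 2 → c (i - j * r) = 3 →
      c (i - l * r) = 2 ∧ a (i - j * r) = 2 ∧ a (i - k * r) = 0 ∧ a (i - l * r) = 0 := by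
    rintro j k l rfl rfl h3
    have r0 := R j (j + 1) (j + 2) rfl rfl
    have r2 := R (j + 2) (j + 3) (j + 4) (by ring) (by ring)
    have r4 := R (j + 4) (j + 5) (j + 6) (by ring) (by ring)
    have B1 := hc (i - (j + 2) * r)
    have B2 := hc (i - (j + 4) * r)
    have B3 := hc (i - (j + 6) * r)
    have A0 := ha (i - j * r)
    have A1 := ha (i - (j + 1) * r)
    have A2 := ha (i - (j + 2) * r)
    have A3 := ha (i - (j + 3) * r)
    have A4 := ha (i - (j + 4) * r)
    have A5 := ha (i - (j + 5) * r)
    have A6 := ha (i - (j + 6) * r)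
    omega
  have hci' : c (i - 0 * r) = 3 := by
    rw [show i - 0 * r = i by ring]; exact hci
  obtain ⟨k01, k02, k03, k04⟩ := key 0 1 2 (by norm_num) (by norm_num) hci'
  have ht3 : 3 ≤ t := by
    rcases show t = 1 ∨ t = 2 ∨ 3 ≤ t by omega with h | h | h
    · exfalso
      subst h
      obtain ⟨-, e1, -, -⟩ := key 1 2 3 (by norm_num) (by norm_num) hct
      omega
    · exfalso
      subst h
      omega
    · exact h
  obtain ⟨kt1, kt2, kt3, kt4⟩ := key t (t + 1) (t + 2) (by ring) (by ring) hct
  have hDt1 : c (i - (t + 1) * r) ≤ 2 := by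
    by_contra hh
    push_neg at hh
    have h3 : c (i - (t + 1) * r) = 3 := by
      have := hc (i - (t + 1) * r); omega
    obtain ⟨-, e1, -, -⟩ := key (t + 1) (t + 2) (t + 3) (by ring) (by ring) h3
    omega
  have INV : ∀ n : ℕ, ∀ j k : ℤ, j = 1 + (n : ℤ) → k = j + 1 → j ≤ t - 2 →
      a (i - j * r) + a (i - k * r) ≤ 1 := by
    intro n
    induction n with
    | zero =>
      intro j k hj hk hle
      have hj1 : j = 1 := by omega
      have hk1 : k = 2 := by omega
      rw [hj1, hk1]
      omega
    | succ n ih =>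
      intro j k hj hk hle
      subst hk
      have hj2 : 2 ≤ j := by omega
      have ihh := ih (j - 1) j (by omega) (by ring) (by omega)
      have r1 := R (j - 1) j (j + 1) (by ring) (by ring)
      have r2 := R j (j + 1) (j + 2) rfl rfl
      have m1 := hmid' (j - 1) (by omega) (by omega)
      have m2 := hmid' j (by omega) (by omega)
      have m3 := hmid' (j + 1) (by omega) (by omega)
      have hcase : c (i - (j + 2) * r) = 2 ∨
          (c (i - (j + 2) * r) = 3 ∧ a (i - (j + 2) * r) = 2) := by
        by_cases hjt : j + 2 = t
        · right; rw [hjt]; exact ⟨hct, kt2⟩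
        · left; exact hmid' (j + 2) (by omega) (by omega)
      have A1 := ha (i - (j - 1) * r)
      have A2 := ha (i - j * r)
      have A3 := ha (i - (j + 1) * r)
      have A4 := ha (i - (j + 2) * r)
      omega
  have hfin := INV (t - 3).toNat (t - 2) (t - 1) (by omega) (by ring) (by omega)
  have rt1 := R (t - 1) t (t + 1) (by ring) (by ring)
  have rt2 := R (t - 2) (t - 1) t (by ring) (by ring)
  have mt1 := hmid' (t - 1) (by omega) (by omega)
  have mt2 := hmid' (t - 2) (by omega) (by omega)
  have A1 := ha (i - (t - 1) * r)
  have A2 := ha (i - (t - 2) * r)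
  have B1 := hc (i - (t + 1) * r)
  omega
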